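/- Assume a₀ is symmetric. Let (λ, σ, u) satisfy the eigenvalue problem, i.e. a₀(σ, τ) + b(τ, u) = 0 for all τ ∈ Σ and b(σ, v) = −λ⟨u, v⟩ for all v ∈ H. Let λ_h ∈ ℝ and (σ_h, u_h) ∈ Σ × H satisfy a₀(σ_h, σ_h) + b(σ_h, u_h) = 0 and b(σ_h, u_h) = −λ_h⟨u_h, u_h⟩. Then the identity (λ − λ_h)⟨u_h, u_h⟩ = a₀(σ − σ_h, σ − σ_h) + 2 b(σ − σ_h, u − u_h) + λ⟨u − u_h, u − u_h⟩ holds. (With A((ξ,w),(τ,v)) := a₀(ξ,τ) + b(τ,w) + b(ξ,v), this is the classic identity (λ − λ_h)(u_h, u_h) = A(U − U_h, U − U_h) + λ(u − u_h, u − u_h).) -/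
import Mathlib


open scoped RealInnerProductSpace

/-- The classic eigenvalue-error identity
`(λ − λ_h)(u_h, u_h) = A(U − U_h, U − U_h) + λ(u − u_h, u − u_h)`,
written out with `A((ξ,w),(τ,v)) = a₀(ξ,τ) + b(τ,w) + b(ξ,v)`. -/
theorem eigenvalue_error_identity
    {Sig H : Type*} [AddCommGroup Sig] [Module ℝ Sig]
    [NormedAddCommGroup H] [InnerProductSpace ℝ H]
    (a₀ : Sig →ₗ[ℝ] Sig →ₗ[ℝ] ℝ) (b : Sig →ₗ[ℝ] H →ₗ[ℝ] ℝ)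
    (hsym : ∀ ξ τ, a₀ ξ τ = a₀ τ ξ)
    (lam lamh : ℝ) (σ σh : Sig) (u uh : H)
    (h1 : ∀ τ, a₀ σ τ + b τ u = 0)
    (h2 : ∀ v, b σ v = -(lam * ⟪u, v⟫))
    (hd1 : a₀ σh σh + b σh uh = 0)
    (hd2 : b σh uh = -(lamh * ⟪uh, uh⟫)) :
    (lam - lamh) * ⟪uh, uh⟫ =
      a₀ (σ - σh) (σ - σh) + 2 * b (σ - σh) (u - uh)
        + lam * ⟪u - uh, u - uh⟫ := by
  have e1 := h1 σ
  have e2 := h1 σh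
  have e3 := h2 u
  have e4 := h2 uh
  have hs := hsym σ σh
  have hic := real_inner_comm u uh
  simp only [map_sub, LinearMap.sub_apply, inner_sub_left, inner_sub_right]
  linear_combination -e1 - e3 + 2*e2 - hs - hd1 - hd2 + 2*e4 + lam*hic
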